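/- The function log(f₁), where f₁(θ) = 1 - 2⌊a₁(θ)/2⌋θ, is Lebesgue integrable on (0,1): ∫₀¹ |log f₁(θ)| dθ < Σ_{k≥1} log(2k+1)/((2k+1)(2k+2)) + Σ_{n,m≥1} (log(2n+1)+log(m+1))/((2nm+1)(2n(m+1)+1)) < ∞. -/

import Mathlib

/-!
Up to the rationals, `(0, 1)` is the disjoint union of `(1/2, 1)`, where `f₁ = 1`, of the
cylinders `{a₁ = 2n+1}`, `n ≥ 1`, where `1/(2n+1) < f₁ = 1 - 2nθ`, and of the cylinders
`{a₁ = 2n, a₂ = m}`, where `1/(2n(m+1)+1) < f₁` and `2n(m+1)+1 ≤ (2n+1)(m+1)`. So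
`|log f₁|` lies below a step function whose integral is the sum of the two series, strictly so on
a set of positive measure. Both series converge because `log x ≤ 2√x`.
-/

open MeasureTheory

/-- `f₁(θ) = 1 - 2⌊a₁(θ)/2⌋θ`, where `a₁(θ) = ⌊1/θ⌋`. -/
noncomputable def fOne (θ : ℝ) : ℝ := 1 - 2 * ((⌊1/θ⌋ / 2 : ℤ) : ℝ) * θ

open Set Real
open scoped ENNReal

lemma abs_log_lt_log_of_one_div_lt {x c : ℝ} (hc : 0 < c) (h₁ : 1 / c < x) (h₂ : x ≤ 1) :
    |log x| < log c := by
  have hx : 0 < x := (one_div_pos.2 hc).trans h₁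
  rw [abs_of_nonpos (log_nonpos hx.le h₂), neg_lt, ← log_inv, ← one_div]
  exact log_lt_log (one_div_pos.2 hc) h₁

lemma log_div_sq_le {x : ℝ} (hx : 1 ≤ x) : log x / x ^ 2 ≤ 2 * x ^ (-(3 / 2 : ℝ)) := by
  have hx₀ : 0 < x := by linarith
  have hsplit : x ^ 2 = x ^ (1 / 2 : ℝ) * x ^ (3 / 2 : ℝ) := by
    rw [← rpow_add hx₀, ← rpow_natCast]; norm_num
  have hlog : log x ≤ 2 * x ^ (1 / 2 : ℝ) := by
    have := log_le_rpow_div hx₀.le (by norm_num : (0 : ℝ) < 1 / 2)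
    linarith
  have h₃ := rpow_pos_of_pos hx₀ (3 / 2 : ℝ)
  rw [rpow_neg hx₀.le, hsplit, div_le_iff₀ (by positivity)]
  calc log x ≤ 2 * x ^ (1 / 2 : ℝ) := hlog
    _ = 2 * (x ^ (3 / 2 : ℝ))⁻¹ * (x ^ (1 / 2 : ℝ) * x ^ (3 / 2 : ℝ)) := by field_simp

lemma summable_nat_add_one_rpow {s : ℝ} (hs : s < -1) :
    Summable fun n : ℕ => ((n : ℝ) + 1) ^ s := by
  simpa using (summable_nat_add_iff 1).2 (summable_nat_rpow.2 hs)

lemma one_div_mem_Ioo_iff {θ c d : ℝ} (hc : 0 < c) (hd : 0 < d) :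
    1 / θ ∈ Ioo c d ↔ θ ∈ Ioo (1 / d) (1 / c) := by
  constructor
  · rintro ⟨h₁, h₂⟩
    have hθ : 0 < θ := one_div_pos.1 (hc.trans h₁)
    exact ⟨(one_div_lt hθ hd).1 h₂, (lt_one_div hc hθ).1 h₁⟩
  · rintro ⟨h₁, h₂⟩
    have hθ : 0 < θ := (one_div_pos.2 hd).trans h₁
    exact ⟨(lt_one_div hc hθ).2 h₂, (one_div_lt hθ hd).2 h₁⟩

lemma Irrational.exists_nat_mem_Ioo {x : ℝ} (hx : Irrational x) (h₁ : 1 < x) :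
    ∃ a : ℕ, 1 ≤ a ∧ x ∈ Ioo (a : ℝ) (a + 1) :=
  ⟨⌊x⌋₊, Nat.le_floor (by exact_mod_cast h₁.le),
    (Nat.floor_le (by linarith)).lt_of_ne (hx.ne_nat _).symm, Nat.lt_floor_add_one x⟩

lemma ae_irrational : ∀ᵐ x : ℝ, Irrational x := by
  have h : {x : ℝ | ¬Irrational x} = range ((↑) : ℚ → ℝ) := by ext; simp [Irrational]
  rw [ae_iff, h]
  exact (countable_range _).measure_zero _

lemma integrableOn_and_setIntegral_lt_of_setLIntegral_lt {α : Type*} [MeasurableSpace α]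
    {μ : Measure α} {s : Set α} {f : α → ℝ} {b : ℝ} (hf₀ : 0 ≤ᵐ[μ.restrict s] f)
    (hf : AEStronglyMeasurable f (μ.restrict s))
    (h : ∫⁻ x in s, ENNReal.ofReal (f x) ∂μ < ENNReal.ofReal b) :
    IntegrableOn f s μ ∧ ∫ x in s, f x ∂μ < b := by
  refine ⟨⟨hf, (hasFiniteIntegral_iff_ofReal hf₀).2 (h.trans ENNReal.ofReal_lt_top)⟩, ?_⟩
  rw [integral_eq_lintegral_of_nonneg_ae hf₀ hf]
  exact ENNReal.toReal_lt_of_lt_ofReal h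

lemma lintegral_tsum_indicator_const {α ι : Type*} [MeasurableSpace α] [Countable ι]
    {μ : Measure α} {s : ι → Set α} (hs : ∀ i, MeasurableSet (s i)) (c : ι → ℝ≥0∞) :
    ∫⁻ x, ∑' i, (s i).indicator (fun _ => c i) x ∂μ = ∑' i, c i * μ (s i) := by
  rw [lintegral_tsum fun i => (measurable_const.indicator (hs i)).aemeasurable]
  exact tsum_congr fun i => lintegral_indicator_const (hs i) (c i)

lemma fOne_eq_of_one_div_mem_Ioo {θ : ℝ} {a : ℕ} (h : 1 / θ ∈ Ioo (a : ℝ) (a + 1)) :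
    fOne θ = 1 - 2 * ((a / 2 : ℕ) : ℝ) * θ := by
  have hfloor : ⌊1 / θ⌋ = a :=
    Int.floor_eq_iff.2 ⟨by exact_mod_cast h.1.le, by exact_mod_cast h.2⟩
  rw [fOne, hfloor]
  norm_cast

lemma mem_Ioo_half_one_iff {θ : ℝ} :
    θ ∈ Ioo (1 / 2) 1 ↔ 1 / θ ∈ Ioo ((1 : ℕ) : ℝ) ((1 : ℕ) + 1) := by
  rw [Nat.cast_one, one_add_one_eq_two, one_div_mem_Ioo_iff one_pos two_pos, div_one]

lemma fOne_eq_one_of_mem_Ioo {θ : ℝ} (h : θ ∈ Ioo (1 / 2) 1) : fOne θ = 1 := by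
  simpa using fOne_eq_of_one_div_mem_Ioo (mem_Ioo_half_one_iff.1 h)

lemma measurable_fOne : Measurable fOne :=
  measurable_const.sub <| (measurable_const.mul <|
    (measurable_from_top (f := fun n : ℤ => ((n / 2 : ℤ) : ℝ))).comp
      (measurable_const.div measurable_id).floor).mul measurable_id

/-- The cylinder `a₁ = 2(k+1)+1`. -/
def oddCylinder (k : ℕ) : Set ℝ :=
  Ioo (1 / (2 * ((k : ℝ) + 1) + 2)) (1 / (2 * ((k : ℝ) + 1) + 1))

/-- The cylinder `a₁ = 2(p.1+1)`, `a₂ = p.2+1`. -/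
def evenCylinder (p : ℕ × ℕ) : Set ℝ :=
  Ioo (((p.2 : ℝ) + 1) / (2 * ((p.1 : ℝ) + 1) * ((p.2 : ℝ) + 1) + 1))
    (((p.2 : ℝ) + 2) / (2 * ((p.1 : ℝ) + 1) * ((p.2 : ℝ) + 2) + 1))

lemma measurableSet_oddCylinder (k : ℕ) : MeasurableSet (oddCylinder k) := measurableSet_Ioo

lemma measurableSet_evenCylinder (p : ℕ × ℕ) : MeasurableSet (evenCylinder p) :=
  measurableSet_Ioo

lemma mem_oddCylinder_iff {k : ℕ} {θ : ℝ} :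
    θ ∈ oddCylinder k ↔ 1 / θ ∈ Ioo ((2 * k + 3 : ℕ) : ℝ) ((2 * k + 3 : ℕ) + 1) := by
  rw [one_div_mem_Ioo_iff (by positivity) (by positivity), oddCylinder]
  push_cast
  ring_nf

lemma mem_evenCylinder_iff {p : ℕ × ℕ} {θ : ℝ} :
    θ ∈ evenCylinder p ↔
      1 / θ - 2 * ((p.1 : ℝ) + 1) ∈ Ioo (1 / ((p.2 : ℝ) + 2)) (1 / ((p.2 : ℝ) + 1)) := by
  set n : ℝ := (p.1 : ℝ) + 1
  set m : ℝ := (p.2 : ℝ) + 1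
  have hn : 0 < n := by positivity
  have hm : 0 < m := by positivity
  have hcyl : evenCylinder p = Ioo (1 / (2 * n + 1 / m)) (1 / (2 * n + 1 / (m + 1))) := by
    rw [evenCylinder]
    congr 1 <;> field_simp <;> ring
  rw [hcyl, ← one_div_mem_Ioo_iff (by positivity) (by positivity),
    show (p.2 : ℝ) + 2 = m + 1 by ring]
  simp only [mem_Ioo, lt_sub_iff_add_lt', sub_lt_iff_lt_add']

lemma fOne_eq_of_mem_oddCylinder {k : ℕ} {θ : ℝ} (h : θ ∈ oddCylinder k) :
    fOne θ = 1 - 2 * ((k : ℝ) + 1) * θ := by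
  rw [fOne_eq_of_one_div_mem_Ioo (mem_oddCylinder_iff.1 h),
    show (2 * k + 3) / 2 = k + 1 by omega]
  push_cast
  ring

lemma fOne_eq_of_mem_evenCylinder {p : ℕ × ℕ} {θ : ℝ} (h : θ ∈ evenCylinder p) :
    fOne θ = 1 - 2 * ((p.1 : ℝ) + 1) * θ := by
  obtain ⟨h₁, h₂⟩ := mem_evenCylinder_iff.1 h
  have h₁ : 0 < 1 / θ - 2 * ((p.1 : ℝ) + 1) := lt_trans (by positivity) h₁
  have h₂ : 1 / θ - 2 * ((p.1 : ℝ) + 1) < 1 := h₂.trans_le <|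
    div_le_one_of_le₀ (by linarith [(p.2.cast_nonneg : (0 : ℝ) ≤ p.2)]) (by positivity)
  have hmem : 1 / θ ∈ Ioo (((2 * p.1 + 2 : ℕ) : ℝ)) ((2 * p.1 + 2 : ℕ) + 1) := by
    push_cast
    constructor <;> linarith
  rw [fOne_eq_of_one_div_mem_Ioo hmem, show (2 * p.1 + 2) / 2 = p.1 + 1 by omega]
  push_cast
  ring

lemma mem_Ioo_or_cylinder_of_irrational {θ : ℝ} (hθ : θ ∈ Ioo 0 1) (hirr : Irrational θ) :
    θ ∈ Ioo (1 / 2) 1 ∨ (∃ k, θ ∈ oddCylinder k) ∨ ∃ p, θ ∈ evenCylinder p := by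
  have hinv : Irrational (1 / θ) := one_div θ ▸ hirr.inv
  obtain ⟨a, ha, hθa⟩ := hinv.exists_nat_mem_Ioo (one_lt_one_div hθ.1 hθ.2)
  obtain ⟨n, rfl | rfl⟩ := Nat.even_or_odd' a
  · obtain ⟨j, rfl⟩ : ∃ j, n = j + 1 := ⟨n - 1, by omega⟩
    set β := 1 / θ - 2 * ((j : ℝ) + 1)
    have hβ : β ∈ Ioo 0 1 := by
      push_cast at hθa
      constructor <;> linarith [hθa.1, hθa.2]
    have hβirr : Irrational β := by
      have := hinv.sub_natCast (2 * (j + 1))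
      push_cast at this
      exact this
    obtain ⟨b, hb, hβb⟩ :=
      (one_div β ▸ hβirr.inv).exists_nat_mem_Ioo (one_lt_one_div hβ.1 hβ.2)
    obtain ⟨m, rfl⟩ : ∃ m, b = m + 1 := ⟨b - 1, by omega⟩
    refine Or.inr (Or.inr ⟨(j, m), mem_evenCylinder_iff.2 ?_⟩)
    rw [one_div_mem_Ioo_iff (by positivity) (by positivity)] at hβb
    push_cast at hβb
    show β ∈ Ioo (1 / ((m : ℝ) + 2)) (1 / ((m : ℝ) + 1))
    convert hβb using 3
    ring
  · rcases n with _ | k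
    · exact Or.inl (mem_Ioo_half_one_iff.2 hθa)
    · rw [show 2 * (k + 1) + 1 = 2 * k + 3 by ring] at hθa
      exact Or.inr (Or.inl ⟨k, mem_oddCylinder_iff.2 hθa⟩)

noncomputable def oddWeight (k : ℕ) : ℝ := log (2 * ((k : ℝ) + 1) + 1)

noncomputable def evenWeight (p : ℕ × ℕ) : ℝ :=
  log (2 * ((p.1 : ℝ) + 1) + 1) + log ((p.2 : ℝ) + 2)

lemma oddWeight_nonneg (k : ℕ) : 0 ≤ oddWeight k :=
  log_nonneg (by linarith [(k.cast_nonneg : (0 : ℝ) ≤ k)])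

lemma evenWeight_nonneg (p : ℕ × ℕ) : 0 ≤ evenWeight p :=
  add_nonneg (log_nonneg (by linarith [(p.1.cast_nonneg : (0 : ℝ) ≤ p.1)]))
    (log_nonneg (by linarith [(p.2.cast_nonneg : (0 : ℝ) ≤ p.2)]))

lemma abs_log_fOne_lt_oddWeight {k : ℕ} {θ : ℝ} (h : θ ∈ oddCylinder k) :
    |log (fOne θ)| < oddWeight k := by
  rw [fOne_eq_of_mem_oddCylinder h, oddWeight]
  obtain ⟨h₁, h₂⟩ := h
  have hk : (0 : ℝ) < (k : ℝ) + 1 := by positivity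
  have hθ : 0 < θ := lt_trans (by positivity) h₁
  rw [lt_div_iff₀ (by positivity)] at h₂
  refine abs_log_lt_log_of_one_div_lt (by positivity) ?_ (by nlinarith)
  rw [div_lt_iff₀ (by positivity)]
  nlinarith

lemma abs_log_fOne_lt_evenWeight {p : ℕ × ℕ} {θ : ℝ} (h : θ ∈ evenCylinder p) :
    |log (fOne θ)| < evenWeight p := by
  rw [fOne_eq_of_mem_evenCylinder h, evenWeight]
  obtain ⟨h₁, h₂⟩ := h
  set n : ℝ := (p.1 : ℝ) + 1
  set m : ℝ := (p.2 : ℝ) + 1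
  have hn : 1 ≤ n := by simp [n]
  have hm : 1 ≤ m := by simp [m]
  rw [show (p.2 : ℝ) + 2 = m + 1 by ring] at h₂ ⊢
  have hθ : 0 < θ := lt_trans (by positivity) h₁
  rw [lt_div_iff₀ (by positivity)] at h₂
  calc |log (1 - 2 * n * θ)| < log (2 * n * (m + 1) + 1) := by
        refine abs_log_lt_log_of_one_div_lt (by positivity) ?_ (by nlinarith)
        rw [div_lt_iff₀ (by positivity)]
        nlinarith
    _ ≤ log ((2 * n + 1) * (m + 1)) := log_le_log (by positivity) (by nlinarith)
    _ = log (2 * n + 1) + log (m + 1) := log_mul (by positivity) (by positivity)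

noncomputable def fOneMajorant (θ : ℝ) : ℝ≥0∞ :=
  ∑' k, (oddCylinder k).indicator (fun _ => ENNReal.ofReal (oddWeight k)) θ +
    ∑' p, (evenCylinder p).indicator (fun _ => ENNReal.ofReal (evenWeight p)) θ

lemma measurable_fOneMajorant : Measurable fOneMajorant :=
  (Measurable.tsum fun _ => measurable_const.indicator (measurableSet_oddCylinder _)).add
    (Measurable.tsum fun _ => measurable_const.indicator (measurableSet_evenCylinder _))

lemma ofReal_oddWeight_le_fOneMajorant {k : ℕ} {θ : ℝ} (h : θ ∈ oddCylinder k) :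
    ENNReal.ofReal (oddWeight k) ≤ fOneMajorant θ :=
  calc ENNReal.ofReal (oddWeight k)
      = (oddCylinder k).indicator (fun _ => ENNReal.ofReal (oddWeight k)) θ :=
        (indicator_of_mem h fun _ => ENNReal.ofReal (oddWeight k)).symm
    _ ≤ _ := ENNReal.le_tsum k
    _ ≤ fOneMajorant θ := le_self_add

lemma ofReal_evenWeight_le_fOneMajorant {p : ℕ × ℕ} {θ : ℝ} (h : θ ∈ evenCylinder p) :
    ENNReal.ofReal (evenWeight p) ≤ fOneMajorant θ :=
  calc ENNReal.ofReal (evenWeight p)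
      = (evenCylinder p).indicator (fun _ => ENNReal.ofReal (evenWeight p)) θ :=
        (indicator_of_mem h fun _ => ENNReal.ofReal (evenWeight p)).symm
    _ ≤ _ := ENNReal.le_tsum p
    _ ≤ fOneMajorant θ := le_add_self

lemma ofReal_abs_log_fOne_le_fOneMajorant {θ : ℝ} (hθ : θ ∈ Ioo 0 1) (hirr : Irrational θ) :
    ENNReal.ofReal |log (fOne θ)| ≤ fOneMajorant θ := by
  obtain h | ⟨k, h⟩ | ⟨p, h⟩ := mem_Ioo_or_cylinder_of_irrational hθ hirr
  · simp [fOne_eq_one_of_mem_Ioo h]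
  · exact (ENNReal.ofReal_le_ofReal (abs_log_fOne_lt_oddWeight h).le).trans
      (ofReal_oddWeight_le_fOneMajorant h)
  · exact (ENNReal.ofReal_le_ofReal (abs_log_fOne_lt_evenWeight h).le).trans
      (ofReal_evenWeight_le_fOneMajorant h)

noncomputable def oddTerm (k : ℕ) : ℝ :=
  oddWeight k / ((2 * ((k : ℝ) + 1) + 1) * (2 * ((k : ℝ) + 1) + 2))

noncomputable def evenTerm (p : ℕ × ℕ) : ℝ :=
  evenWeight p / ((2 * ((p.1 : ℝ) + 1) * ((p.2 : ℝ) + 1) + 1) *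
    (2 * ((p.1 : ℝ) + 1) * ((p.2 : ℝ) + 2) + 1))

lemma oddTerm_nonneg (k : ℕ) : 0 ≤ oddTerm k :=
  div_nonneg (oddWeight_nonneg k) (by positivity)

lemma evenTerm_nonneg (p : ℕ × ℕ) : 0 ≤ evenTerm p :=
  div_nonneg (evenWeight_nonneg p) (by positivity)

lemma ofReal_oddWeight_mul_volume (k : ℕ) :
    ENNReal.ofReal (oddWeight k) * volume (oddCylinder k) = ENNReal.ofReal (oddTerm k) := by
  rw [oddCylinder, Real.volume_Ioo, ← ENNReal.ofReal_mul (oddWeight_nonneg k), oddTerm]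
  congr 1
  field_simp
  ring

lemma ofReal_evenWeight_mul_volume (p : ℕ × ℕ) :
    ENNReal.ofReal (evenWeight p) * volume (evenCylinder p) = ENNReal.ofReal (evenTerm p) := by
  rw [evenCylinder, Real.volume_Ioo, ← ENNReal.ofReal_mul (evenWeight_nonneg p), evenTerm]
  congr 1
  field_simp
  ring

lemma oddTerm_le (k : ℕ) : oddTerm k ≤ 2 * ((k : ℝ) + 1) ^ (-(3 / 2 : ℝ)) := by
  set a : ℝ := 2 * ((k : ℝ) + 1) + 1 with ha_def
  have hk : (0 : ℝ) < (k : ℝ) + 1 := by positivity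
  have hka : (k : ℝ) + 1 ≤ a := by rw [ha_def]; linarith
  have ha : 1 ≤ a := by linarith
  calc oddTerm k ≤ log a / a ^ 2 :=
        div_le_div_of_nonneg_left (log_nonneg ha) (by positivity) (by nlinarith)
    _ ≤ 2 * a ^ (-(3 / 2 : ℝ)) := log_div_sq_le ha
    _ ≤ 2 * ((k : ℝ) + 1) ^ (-(3 / 2 : ℝ)) :=
        mul_le_mul_of_nonneg_left (rpow_le_rpow_of_nonpos hk hka (by norm_num)) zero_le_two

lemma evenTerm_le (p : ℕ × ℕ) :
    evenTerm p ≤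
      18 * (((p.1 : ℝ) + 1) ^ (-(3 / 2 : ℝ)) * ((p.2 : ℝ) + 1) ^ (-(3 / 2 : ℝ))) := by
  rw [evenTerm, evenWeight, show (p.2 : ℝ) + 2 = (p.2 + 1) + 1 by ring]
  set n : ℝ := (p.1 : ℝ) + 1
  set m : ℝ := (p.2 : ℝ) + 1
  have hn : 1 ≤ n := by simp [n]
  have hm : 1 ≤ m := by simp [m]
  rw [← log_mul (by positivity) (by positivity)]
  set z : ℝ := (2 * n + 1) * (m + 1)
  have hz : n * m ≤ z := by nlinarith
  -- `z ≤ 6nm`, so `z² ≤ 36n²m²` is at most nine times the denominator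
  have hden : z ^ 2 ≤ 9 * ((2 * n * m + 1) * (2 * n * (m + 1) + 1)) := by
    have : z ≤ 6 * (n * m) := by nlinarith
    nlinarith
  calc log z / ((2 * n * m + 1) * (2 * n * (m + 1) + 1))
      ≤ log z / (z ^ 2 / 9) :=
        div_le_div_of_nonneg_left (log_nonneg (by nlinarith)) (by positivity) (by linarith)
    _ = 9 * (log z / z ^ 2) := by field_simp
    _ ≤ 9 * (2 * z ^ (-(3 / 2 : ℝ))) := by gcongr; exact log_div_sq_le (by nlinarith)
    _ ≤ 9 * (2 * (n * m) ^ (-(3 / 2 : ℝ))) := by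
        have := rpow_le_rpow_of_nonpos (by positivity) hz (by norm_num : -(3 / 2 : ℝ) ≤ 0)
        linarith
    _ = 18 * (n ^ (-(3 / 2 : ℝ)) * m ^ (-(3 / 2 : ℝ))) := by
        rw [mul_rpow (by positivity) (by positivity)]
        ring

lemma summable_oddTerm : Summable oddTerm :=
  Summable.of_nonneg_of_le oddTerm_nonneg oddTerm_le
    ((summable_nat_add_one_rpow (by norm_num)).mul_left 2)

lemma summable_evenTerm : Summable evenTerm := by
  have h := summable_nat_add_one_rpow (s := -(3 / 2)) (by norm_num)
  exact Summable.of_nonneg_of_le evenTerm_nonneg evenTerm_le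
    ((h.mul_of_nonneg h (fun _ => by positivity) (fun _ => by positivity)).mul_left 18)

lemma lintegral_fOneMajorant :
    ∫⁻ θ, fOneMajorant θ = ENNReal.ofReal (∑' k, oddTerm k + ∑' p, evenTerm p) := by
  unfold fOneMajorant
  rw [lintegral_add_left
      (Measurable.tsum fun _ => measurable_const.indicator (measurableSet_oddCylinder _)),
    lintegral_tsum_indicator_const measurableSet_oddCylinder,
    lintegral_tsum_indicator_const measurableSet_evenCylinder,
    ENNReal.ofReal_add (tsum_nonneg oddTerm_nonneg) (tsum_nonneg evenTerm_nonneg),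
    ENNReal.ofReal_tsum_of_nonneg oddTerm_nonneg summable_oddTerm,
    ENNReal.ofReal_tsum_of_nonneg evenTerm_nonneg summable_evenTerm]
  simp only [ofReal_oddWeight_mul_volume, ofReal_evenWeight_mul_volume]

lemma setLIntegral_abs_log_fOne_lt :
    ∫⁻ θ in Ioo 0 1, ENNReal.ofReal |log (fOne θ)| <
      ENNReal.ofReal (∑' k, oddTerm k + ∑' p, evenTerm p) := by
  have hle : ∀ᵐ θ ∂volume.restrict (Ioo (0 : ℝ) 1),
      ENNReal.ofReal |log (fOne θ)| ≤ fOneMajorant θ :=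
    (ae_restrict_iff' measurableSet_Ioo).2
      (ae_irrational.mono fun θ hirr hθ => ofReal_abs_log_fOne_le_fOneMajorant hθ hirr)
  have hfin : ∫⁻ θ in Ioo 0 1, ENNReal.ofReal |log (fOne θ)| ≠ ∞ :=
    ((lintegral_mono_ae hle).trans (setLIntegral_le_lintegral _ _)).trans_lt
      (lintegral_fOneMajorant ▸ ENNReal.ofReal_lt_top) |>.ne
  -- the bound is strict on `oddCylinder 0 = (1/4, 1/3) ⊆ (0, 1)`, a set of positive measure
  have hpos : volume.restrict (Ioo (0 : ℝ) 1) (oddCylinder 0) ≠ 0 := by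
    rw [Measure.restrict_apply (measurableSet_oddCylinder 0), oddCylinder, Ioo_inter_Ioo,
      Real.volume_Ioo]
    norm_num
  rw [← lintegral_fOneMajorant]
  refine (lintegral_strict_mono_of_ae_le_of_ae_lt_on measurable_fOneMajorant.aemeasurable hfin
    hle hpos (ae_of_all _ fun θ hθ => ?_)).trans_le (setLIntegral_le_lintegral _ _)
  exact (ENNReal.ofReal_lt_ofReal_iff_of_nonneg (abs_nonneg _)).2 (abs_log_fOne_lt_oddWeight hθ)
    |>.trans_le (ofReal_oddWeight_le_fOneMajorant hθ)

/-- `log f₁` is Lebesgue integrable on `(0,1)`, with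
`∫ |log f₁| < Σ_k log(2k+1)/((2k+1)(2k+2)) + Σ_{n,m} (log(2n+1)+log(m+1))/((2nm+1)(2n(m+1)+1))`,
both series being (finite) convergent series of nonnegative terms. -/
theorem stmt15 :
    IntegrableOn (fun θ => |Real.log (fOne θ)|) (Set.Ioo (0:ℝ) 1) ∧
      (Summable fun k : ℕ =>
        Real.log (2*((k:ℝ)+1)+1) / ((2*((k:ℝ)+1)+1) * (2*((k:ℝ)+1)+2))) ∧
      (Summable fun p : ℕ × ℕ =>
        (Real.log (2*((p.1:ℝ)+1)+1) + Real.log ((p.2:ℝ)+2)) /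
          ((2*((p.1:ℝ)+1)*((p.2:ℝ)+1)+1) * (2*((p.1:ℝ)+1)*((p.2:ℝ)+2)+1))) ∧
      (∫ θ in Set.Ioo (0:ℝ) 1, |Real.log (fOne θ)|) <
        (∑' k : ℕ, Real.log (2*((k:ℝ)+1)+1) / ((2*((k:ℝ)+1)+1) * (2*((k:ℝ)+1)+2))) +
          ∑' p : ℕ × ℕ,
            (Real.log (2*((p.1:ℝ)+1)+1) + Real.log ((p.2:ℝ)+2)) /
              ((2*((p.1:ℝ)+1)*((p.2:ℝ)+1)+1) * (2*((p.1:ℝ)+1)*((p.2:ℝ)+2)+1)) := by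
  obtain ⟨hint, hlt⟩ := integrableOn_and_setIntegral_lt_of_setLIntegral_lt
    (ae_of_all _ fun θ => abs_nonneg (log (fOne θ)))
    (measurable_log.comp measurable_fOne).abs.aestronglyMeasurable setLIntegral_abs_log_fOne_lt
  exact ⟨hint, summable_oddTerm, summable_evenTerm, hlt⟩
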